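/- Let $E, F$ be Riesz spaces and $T : E \to F$ a disjointness preserving orthogonally additive operator. Then the modulus $|T| = T \vee (-T)$ exists in the ordered vector space of orthogonally additive operators, and $|T|(x) = |T(x)|$ for every $x \in E$. -/

import Mathlib

/-!
For disjoint `a`, `b` in a lattice-ordered group, `|a + b| = |a| + |b|`. Since `T` is orthogonally
additive and preserves disjointness, this makes `x ↦ |T x|` orthogonally additive; and as
`|T x| = T x ⊔ -T x`, it lies below every upper bound of `T` and `-T`.
-/

/-- Disjointness in a Riesz space: `|x| ⊓ |y| = 0`. -/
def RDisjoint {E : Type*} [Lattice E] [AddCommGroup E] (x y : E) : Prop :=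
  |x| ⊓ |y| = 0

/-- `x` is a fragment of `e` (lateral order `x ⊑ e`): `x ⊥ (e - x)`. -/
def IsFragment {E : Type*} [Lattice E] [AddCommGroup E] (x e : E) : Prop :=
  RDisjoint x (e - x)

/-- An orthogonally additive operator. -/
def IsOAO {E F : Type*} [Lattice E] [AddCommGroup E] [Lattice F] [AddCommGroup F]
    (T : E → F) : Prop :=
  ∀ x y : E, RDisjoint x y → T (x + y) = T x + T y

variable {E F : Type*}
  [Lattice E] [AddCommGroup E] [CovariantClass E E (· + ·) (· ≤ ·)]
  [Lattice F] [AddCommGroup F] [CovariantClass F F (· + ·) (· ≤ ·)]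

section LatticeOrderedGroup

variable {α : Type*} [Lattice α] [AddCommGroup α]

lemma RDisjoint.symm {a b : α} (h : RDisjoint a b) : RDisjoint b a := by
  rwa [RDisjoint, inf_comm]

variable [AddLeftMono α]

lemma inf_add_le_inf_add_inf {x y z : α} (hx : 0 ≤ x) (hy : 0 ≤ y) (hz : 0 ≤ z) :
    x ⊓ (y + z) ≤ x ⊓ y + x ⊓ z := by
  rw [add_inf, inf_add, inf_add]
  have hle : x ⊓ (y + z) ≤ x := inf_le_left
  refine le_inf (le_inf ?_ ?_) (le_inf ?_ inf_le_right)
  · exact hle.trans (le_add_of_nonneg_right hx)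
  · exact hle.trans (le_add_of_nonneg_left hy)
  · exact hle.trans (le_add_of_nonneg_right hz)

lemma abs_le_abs_add_of_rdisjoint {a b : α} (h : RDisjoint a b) : |a| ≤ |a + b| := by
  unfold RDisjoint at h
  calc |a| = |a| ⊓ (|a + b| + |b|) := by
        refine (inf_eq_left.2 ?_).symm
        simpa using abs_add_le (a + b) (-b)
    _ ≤ |a| ⊓ |a + b| + |a| ⊓ |b| :=
        inf_add_le_inf_add_inf (abs_nonneg _) (abs_nonneg _) (abs_nonneg _)
    _ = |a| ⊓ |a + b| := by rw [h, add_zero]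
    _ ≤ |a + b| := inf_le_right

lemma abs_add_of_rdisjoint {a b : α} (h : RDisjoint a b) : |a + b| = |a| + |b| := by
  have hb : |b| ≤ |a + b| := add_comm a b ▸ abs_le_abs_add_of_rdisjoint h.symm
  refine le_antisymm (abs_add_le a b) ?_
  rw [← inf_add_sup, show |a| ⊓ |b| = 0 from h, zero_add]
  exact sup_le (abs_le_abs_add_of_rdisjoint h) hb

end LatticeOrderedGroup

lemma IsOAO.abs_comp {E F : Type*} [Lattice E] [AddCommGroup E]
    [Lattice F] [AddCommGroup F] [AddLeftMono F] {T : E → F} (hT : IsOAO T)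
    (hd : ∀ x y : E, RDisjoint x y → RDisjoint (T x) (T y)) :
    IsOAO (fun x => |T x|) := fun x y hxy => by
  simp only [hT x y hxy, abs_add_of_rdisjoint (hd x y hxy)]

/-- For a disjointness preserving OAO `T`, the modulus `|T| = T ∨ (-T)` exists in the
ordered vector space of OAOs and `|T|(x) = |T x|`. -/
theorem disjointness_preserving_oao_abs (T : E → F)
    (hT : IsOAO T)
    (hd : ∀ x y : E, RDisjoint x y → RDisjoint (T x) (T y)) :
    IsOAO (fun x => |T x|) ∧
    (∀ x : E, T x ≤ |T x|) ∧ (∀ x : E, -T x ≤ |T x|) ∧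
    ∀ P : E → F, IsOAO P → (∀ x, T x ≤ P x) → (∀ x, -T x ≤ P x) →
      ∀ x : E, |T x| ≤ P x :=
  ⟨hT.abs_comp hd, fun x => le_abs_self (T x), fun x => neg_le_abs (T x),
    fun _ _ hP hnegP x => abs_le'.2 ⟨hP x, hnegP x⟩⟩
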